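/- For all integers q ≥ 2 and n ≥ 1, and under each of the scenarios (∗∗), (∗•), (••), the family 𝓝_q is n-cell implementable if and only if q ≤ 2n. -/

import Mathlib

/-- The alphabet 𝔹• = {0, 1, ∗, •}. -/
inductive BB : Type
  | zero
  | one
  | star
  | reject
deriving DecidableEq

instance : Fintype BB :=
  ⟨{BB.zero, BB.one, BB.star, BB.reject}, fun x => by cases x <;> decide⟩

/-- The cell function T : 𝔹• × 𝔹• → 𝔹: T(u,ϑ) = 1 iff u = ∗, or ϑ = ∗,
or u,ϑ ∈ 𝔹 with u = ϑ. -/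
def Tcell : BB → BB → Bool
  | BB.star, _ => true
  | _, BB.star => true
  | BB.zero, BB.zero => true
  | BB.one, BB.one => true
  | _, _ => false

/-- The word-level function T(u,ϑ) = ⋀_{j<n} T(u_j, ϑ_j). -/
def Tword {n : ℕ} (u θ : Fin n → BB) : Bool :=
  decide (∀ j, Tcell (u j) (θ j) = true)

/-- The alphabet 𝔹 = {0,1} ⊆ 𝔹•. -/
def Bcirc : Set BB := {BB.zero, BB.one}

/-- The alphabet 𝔹∗ = {0,1,∗} ⊆ 𝔹•. -/
def Bstar : Set BB := {BB.zero, BB.one, BB.star}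

/-- The full alphabet 𝔹•. -/
def Bdot : Set BB := Set.univ

/-- A family Φ of functions {0,…,q−1} → 𝔹 is n-cell implementable under
scenario (A,B) if there are mappings u : {0,…,q−1} → A^n and ϑ : Φ → B^n
with f(x) = T(u(x), ϑ(f)) for all f ∈ Φ and x. -/
def Implementable (A B : Set BB) (n q : ℕ) (Φ : Set (Fin q → Bool)) : Prop :=
  ∃ u : Fin q → Fin n → BB, ∃ θ : (Fin q → Bool) → Fin n → BB,
    (∀ x j, u x j ∈ A) ∧ (∀ f ∈ Φ, ∀ j, θ f j ∈ B) ∧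
    (∀ f ∈ Φ, ∀ x, f x = Tword (u x) (θ f))

/-- The family 𝓔_q = { x ↦ [x = t] : t ∈ [q⟩ }. -/
def Eset (q : ℕ) : Set (Fin q → Bool) :=
  { f | ∃ t : Fin q, f = fun x => decide (x = t) }

/-- The family 𝓝_q = { x ↦ [x ≠ t] : t ∈ [q⟩ }. -/
def Nset (q : ℕ) : Set (Fin q → Bool) :=
  { f | ∃ t : Fin q, f = fun x => decide (x ≠ t) }

/-- The family 𝓖_q = { x ↦ [x ≥ t] : t ∈ [q⟩ }. -/
def Gset (q : ℕ) : Set (Fin q → Bool) :=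
  { f | ∃ t : Fin q, f = fun x => decide (t ≤ x) }

/-- The family 𝓛_q = { x ↦ [x ≤ t] : t ∈ [q⟩ }. -/
def Lset (q : ℕ) : Set (Fin q → Bool) :=
  { f | ∃ t : Fin q, f = fun x => decide (x ≤ t) }

/-!
A word `u x` is rejected by `ϑ t` only through a cell where both are non-`∗` and disagree.
For the upper bound, encode `x` injectively as a pair `(j, b) ∈ Fin n × 𝔹`: `u x` carries `b`
in cell `j` and `ϑ t` carries the complementary bit of `t` in its cell, with `∗` everywhere
else, so the two clash exactly when `x = t`. For the lower bound, every `t` needs a cell where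
`u t` and `ϑ t` clash while `u x` and `ϑ t` agree for `x ≠ t`; no cell can serve three values
of `t` this way, so `q ≤ 2n`.
-/

open Finset

lemma Tword_eq_true_iff {n : ℕ} {u θ : Fin n → BB} :
    Tword u θ = true ↔ ∀ j, Tcell (u j) (θ j) = true := by
  simp [Tword]

lemma Implementable.mono {A A' B B' : Set BB} {n q : ℕ} {Φ : Set (Fin q → Bool)}
    (h : Implementable A B n q Φ) (hA : A ⊆ A') (hB : B ⊆ B') :
    Implementable A' B' n q Φ := by
  obtain ⟨u, θ, hu, hθ, hT⟩ := h
  exact ⟨u, θ, fun x j => hA (hu x j), fun f hf j => hB (hθ f hf j), hT⟩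

lemma implementable_range_iff {A B : Set BB} {n q : ℕ} {ι : Type*}
    (g : ι → Fin q → Bool) :
    Implementable A B n q (Set.range g) ↔
      ∃ u : Fin q → Fin n → BB, ∃ θ : ι → Fin n → BB,
        (∀ x j, u x j ∈ A) ∧ (∀ t j, θ t j ∈ B) ∧ ∀ t x, g t x = Tword (u x) (θ t) := by
  classical
  constructor
  · rintro ⟨u, θ, hu, hθ, hT⟩
    exact ⟨u, fun t => θ (g t), hu, fun t => hθ _ ⟨t, rfl⟩, fun t => hT _ ⟨t, rfl⟩⟩
  · rintro ⟨u, θ, hu, hθ, hT⟩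
    refine ⟨u, fun f => if h : f ∈ Set.range g then θ (Set.mem_range.1 h).choose
      else fun _ => BB.star, hu, ?_, ?_⟩
    · rintro f hf j
      simpa only [dif_pos hf] using hθ _ j
    · rintro f hf x
      simp only [dif_pos hf]
      rw [← hT, (Set.mem_range.1 hf).choose_spec]

lemma implementable_Nset_iff {A B : Set BB} {n q : ℕ} :
    Implementable A B n q (Nset q) ↔
      ∃ u θ : Fin q → Fin n → BB, (∀ x j, u x j ∈ A) ∧ (∀ t j, θ t j ∈ B) ∧
        ∀ x t, Tword (u x) (θ t) = true ↔ x ≠ t := by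
  have hN : Nset q = Set.range fun t x => decide (x ≠ t) := by
    ext f
    simp only [Nset, Set.mem_ofPred_eq, Set.mem_range, eq_comm]
  rw [hN, implementable_range_iff]
  refine exists₂_congr fun u θ => and_congr_right' <| and_congr_right' ⟨?_, ?_⟩
  · intro h x t
    rw [← h, decide_eq_true_iff]
  · intro h t x
    rw [Bool.eq_iff_iff, h, decide_eq_true_iff]

section UpperBound

variable {n : ℕ}

def ofBool : Bool → BB
  | false => BB.zero
  | true => BB.one

lemma ofBool_mem_Bstar (b : Bool) : ofBool b ∈ Bstar := by
  cases b <;> simp [ofBool, Bstar]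

lemma Tcell_ofBool_ofBool_not (b c : Bool) : Tcell (ofBool b) (ofBool !c) = true ↔ b ≠ c := by
  cases b <;> cases c <;> decide

def starsWith (i : Fin n) (b : BB) : Fin n → BB :=
  Function.update (fun _ => BB.star) i b

lemma starsWith_mem_Bstar {i : Fin n} {b : BB} (hb : b ∈ Bstar) (j : Fin n) :
    starsWith i b j ∈ Bstar := by
  unfold starsWith
  rcases eq_or_ne j i with rfl | hj
  · simpa using hb
  · simp [Function.update_of_ne hj, Bstar]

lemma Tcell_star_right (a : BB) : Tcell a BB.star = true := by
  cases a <;> rfl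

lemma Tword_starsWith_starsWith (i k : Fin n) (a b : BB) :
    Tword (starsWith i a) (starsWith k b) = true ↔ (i = k → Tcell a b = true) := by
  rw [Tword_eq_true_iff]
  constructor
  · rintro h rfl
    simpa [starsWith] using h i
  · intro h j
    unfold starsWith
    rcases eq_or_ne j i with rfl | hi
    · rcases eq_or_ne j k with rfl | hk
      · simpa using h rfl
      · simp [Function.update_of_ne hk, Tcell_star_right]
    · simp [Function.update_of_ne hi, Tcell]

lemma Tword_starsWith_ofBool_iff_ne {ι : Type*} (e : ι ↪ Fin n × Bool) (x t : ι) :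
    Tword (starsWith (e x).1 (ofBool (e x).2)) (starsWith (e t).1 (ofBool !(e t).2)) = true ↔
      x ≠ t := by
  rw [Tword_starsWith_starsWith, Tcell_ofBool_ofBool_not, ← e.injective.ne_iff]
  simp only [ne_eq, Prod.ext_iff]
  tauto

lemma implementable_Nset_of_le {q : ℕ} (hq : q ≤ 2 * n) :
    Implementable Bstar Bstar n q (Nset q) := by
  obtain ⟨e⟩ : Nonempty (Fin q ↪ Fin n × Bool) :=
    Function.Embedding.nonempty_of_card_le (by simpa [mul_comm] using hq)
  exact implementable_Nset_iff.2
    ⟨fun x => starsWith (e x).1 (ofBool (e x).2), fun t => starsWith (e t).1 (ofBool !(e t).2),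
      fun _ => starsWith_mem_Bstar (ofBool_mem_Bstar _),
      fun _ => starsWith_mem_Bstar (ofBool_mem_Bstar _),
      Tword_starsWith_ofBool_iff_ne e⟩

end UpperBound

/-- The table `Tcell aᵢ vₖ` cannot be `false` exactly on its diagonal; four off-diagonal
entries already rule it out. -/
lemma Tcell_no_three_clashes : ∀ a₁ a₂ a₃ v₁ v₂ v₃ : BB,
    Tcell a₁ v₁ = false → Tcell a₂ v₂ = false → Tcell a₃ v₃ = false →
    Tcell a₂ v₁ = true → Tcell a₃ v₁ = true → Tcell a₁ v₂ = true → Tcell a₃ v₂ = true →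
    False := by
  decide

lemma card_le_two_mul_of_Tword_iff_ne {ι : Type*} [Fintype ι] {n : ℕ}
    (u θ : ι → Fin n → BB) (h : ∀ x t, Tword (u x) (θ t) = true ↔ x ≠ t) :
    Fintype.card ι ≤ 2 * n := by
  classical
  have hclash : ∀ t, ∃ j, Tcell (u t j) (θ t j) = false := by
    intro t
    have hrej : Tword (u t) (θ t) ≠ true := fun hT => (h t t).1 hT rfl
    simpa [Tword_eq_true_iff] using hrej
  choose clash hclash using hclash
  have hagree : ∀ x t j, x ≠ t → Tcell (u x j) (θ t j) = true :=
    fun x t j hxt => Tword_eq_true_iff.1 ((h x t).2 hxt) j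
  have hfiber : ∀ j ∈ (univ : Finset (Fin n)), #{t ∈ univ | clash t = j} ≤ 2 := by
    intro j _
    by_contra! hlt
    obtain ⟨t₁, h₁, t₂, h₂, t₃, h₃, h₁₂, h₁₃, h₂₃⟩ := two_lt_card.1 hlt
    simp only [mem_filter, mem_univ, true_and] at h₁ h₂ h₃
    exact Tcell_no_three_clashes _ _ _ _ _ _
      (h₁ ▸ hclash t₁) (h₂ ▸ hclash t₂) (h₃ ▸ hclash t₃)
      (hagree _ _ _ h₁₂.symm) (hagree _ _ _ h₁₃.symm) (hagree _ _ _ h₁₂) (hagree _ _ _ h₂₃.symm)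
  simpa using card_le_mul_card_image_of_maps_to (fun t _ => mem_univ (clash t)) 2 hfiber

lemma le_of_implementable_Nset {A B : Set BB} {n q : ℕ}
    (h : Implementable A B n q (Nset q)) : q ≤ 2 * n := by
  obtain ⟨u, θ, -, -, hT⟩ := implementable_Nset_iff.1 h
  simpa using card_le_two_mul_of_Tword_iff_ne u θ hT

theorem Nset_implementable_starStar_starReject_rejectReject_general (q n : ℕ) :
    (Implementable Bstar Bstar n q (Nset q) ↔ q ≤ 2 * n) ∧
    (Implementable Bstar Bdot n q (Nset q) ↔ q ≤ 2 * n) ∧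
    (Implementable Bdot Bdot n q (Nset q) ↔ q ≤ 2 * n) := by
  have hBstar : Bstar ⊆ Bdot := Set.subset_univ _
  refine ⟨⟨le_of_implementable_Nset, implementable_Nset_of_le⟩,
    ⟨le_of_implementable_Nset, fun h => (implementable_Nset_of_le h).mono subset_rfl hBstar⟩,
    ⟨le_of_implementable_Nset, fun h => (implementable_Nset_of_le h).mono hBstar hBstar⟩⟩

theorem Nset_implementable_starStar_starReject_rejectReject (q n : ℕ)
    (hq : 2 ≤ q) (hn : 1 ≤ n) :
    (Implementable Bstar Bstar n q (Nset q) ↔ q ≤ 2 * n) ∧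
    (Implementable Bstar Bdot n q (Nset q) ↔ q ≤ 2 * n) ∧
    (Implementable Bdot Bdot n q (Nset q) ↔ q ≤ 2 * n) :=
  Nset_implementable_starStar_starReject_rejectReject_general q n
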